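/- arXiv:1606.04137 — 3 statements merged into one kernel-verified Lean document; each statement's English description precedes it below -/
import Mathlib

section
/- Let q ≥ 2 and 1 < s < q, and write s̄ = q - s. Suppose a positive integer b can be written as b = r + ∑_{j=k+1}^{∞} ε_j (q^j - 1), where r ∈ [[s̄^k]_q, [1^k 0]_q], each ε_j ∈ {0,1}, not all ε_j are 0, and ε_j = 0 for j sufficiently large. Then the largest index j ≥ k+1 with ε_j = 1 equals the largest j ∈ ℕ with q^j - 1 ≤ b. -/
/-! Let `J` be the top index with `ε_J = 1`. The summand `q^J - 1` already gives `q^J - 1 ≤ b`.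
Conversely `r ≤ q + ⋯ + q^k` and the `ε`-sum is at most `q^(k+1) + ⋯ + q^J`, so
`b ≤ q + ⋯ + q^J ≤ q^(J+1) - 2 < q^(J+1) - 1`. -/

open Finset

theorem sum_Icc_pow_add_two_le {q : ℕ} (hq : 2 ≤ q) (m : ℕ) :
    ∑ i ∈ Icc 1 m, q ^ i + 2 ≤ q ^ (m + 1) := by
  induction m with
  | zero => simpa using hq
  | succ m ih =>
    rw [sum_Icc_succ_top (by omega), pow_succ _ (m + 1)]
    have : q ≤ q ^ (m + 1) := Nat.le_self_pow (by omega) q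
    nlinarith

theorem isGreatest_pow_sub_one_le {q b J : ℕ} (hq : 1 < q) (hlow : q ^ J - 1 ≤ b)
    (hup : b + 2 ≤ q ^ (J + 1)) : IsGreatest {j | q ^ j - 1 ≤ b} J := by
  refine ⟨hlow, fun j (hj : q ^ j - 1 ≤ b) => not_lt.1 fun hJj => ?_⟩
  have : q ^ (J + 1) ≤ q ^ j := Nat.pow_le_pow_right (by omega) hJj
  omega

theorem sum_mul_pow_sub_one_le_sum_Ioc {q k J : ℕ} {ε : ℕ → ℕ} (s : Finset ℕ)
    (hε01 : ∀ j, ε j ≤ 1) (hsupp : ∀ j, ε j ≠ 0 → j ∈ Ioc k J) :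
    ∑ j ∈ s, ε j * (q ^ j - 1) ≤ ∑ j ∈ Ioc k J, q ^ j := by
  calc ∑ j ∈ s, ε j * (q ^ j - 1)
      ≤ ∑ j ∈ Ioc k J, ε j * (q ^ j - 1) :=
        sum_le_sum_of_ne_zero fun j _ hj => hsupp j (left_ne_zero_of_mul hj)
    _ ≤ ∑ j ∈ Ioc k J, q ^ j :=
        sum_le_sum fun j _ => (Nat.mul_le_mul (hε01 j) (Nat.sub_le _ 1)).trans_eq (one_mul _)

theorem stmt1_general (q k : ℕ) (hq : 2 ≤ q)
    (b r : ℕ)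
    (hr2 : r ≤ ∑ i ∈ Finset.Icc 1 k, q ^ i)
    (ε : ℕ → ℕ) (hε01 : ∀ j, ε j ≤ 1)
    (hεlow : ∀ j ≤ k, ε j = 0)
    (N : ℕ) (hN : ∀ j ≥ N, ε j = 0)
    (hne : ∃ j, ε j = 1)
    (hdec : b = r + ∑ j ∈ Finset.range N, ε j * (q ^ j - 1)) :
    ∃ J : ℕ, IsGreatest {j | ε j = 1} J ∧ IsGreatest {j | q ^ j - 1 ≤ b} J := by
  have hbdd : BddAbove {j | ε j = 1} :=
    ⟨N, fun j (hj : ε j = 1) => not_lt.1 fun hNj => by simp [hN j hNj.le] at hj⟩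
  obtain ⟨J, hJ⟩ := hbdd.exists_isGreatest_of_nonempty hne
  have hsupp : ∀ j, ε j ≠ 0 → j ∈ Ioc k J := fun j hj =>
    mem_Ioc.2 ⟨not_le.1 fun hjk => hj (hεlow j hjk),
      hJ.2 (show ε j = 1 by have := hε01 j; omega)⟩
  have hJ1 : ε J = 1 := hJ.1
  have hkJ : k ≤ J := (mem_Ioc.1 (hsupp J (by omega))).1.le
  have hJN : J < N := not_le.1 fun hNJ => by have := hN J hNJ; omega
  refine ⟨J, hJ, isGreatest_pow_sub_one_le (by omega) ?_ ?_⟩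
  · have := single_le_sum (fun j _ => Nat.zero_le (ε j * (q ^ j - 1))) (mem_range.2 hJN)
    rw [hJ1, one_mul] at this
    omega
  · calc b + 2 ≤ ∑ i ∈ Icc 1 k, q ^ i + ∑ i ∈ Ioc k J, q ^ i + 2 := by
          rw [hdec]
          gcongr
          exact sum_mul_pow_sub_one_le_sum_Ioc _ hε01 hsupp
      _ = ∑ i ∈ Icc 1 J, q ^ i + 2 := by
          have hIcc (n : ℕ) : Icc 1 n = Ioc 0 n := Icc_add_one_left_eq_Ioc 0 n
          rw [hIcc, hIcc, sum_Ioc_consecutive _ k.zero_le hkJ]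
      _ ≤ q ^ (J + 1) := sum_Icc_pow_add_two_le hq J

/-- if `b = r + ∑ ε_j (q^j - 1)` with
`r ∈ [[s̄^k]_q, [1^k 0]_q]`, `ε_j ∈ {0,1}` not all zero, supported on `j ≥ k+1`
and vanishing for large `j`, then the largest `j` with `ε_j = 1` equals the
largest `j` with `q^j - 1 ≤ b`. -/
theorem stmt1 (q s k : ℕ) (hq : 2 ≤ q) (hs1 : 1 < s) (hsq : s < q)
    (b r : ℕ) (hb : 0 < b)
    (hr1 : (q - s) * (q ^ k - 1) / (q - 1) ≤ r)
    (hr2 : r ≤ ∑ i ∈ Finset.Icc 1 k, q ^ i)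
    (ε : ℕ → ℕ) (hε01 : ∀ j, ε j ≤ 1)
    (hεlow : ∀ j ≤ k, ε j = 0)
    (N : ℕ) (hN : ∀ j ≥ N, ε j = 0)
    (hne : ∃ j, ε j = 1)
    (hdec : b = r + ∑ j ∈ Finset.range N, ε j * (q ^ j - 1)) :
    ∃ J : ℕ, IsGreatest {j | ε j = 1} J ∧ IsGreatest {j | q ^ j - 1 ≤ b} J :=
  stmt1_general q k hq b r hr2 ε hε01 hεlow N hN hne hdec
end

section
/- Let q ≥ 2 and j ≥ 2. Define recursively b_{j,m,1} = [1^m 0^j]_q and b_{j,m,n+1} = b_{j,m,n} - (q^{l} - 1) where l is the largest positive integer with q^l - 1 ≤ b_{j,m,n}. Then for all 1 ≤ n ≤ q^{j-1} and m ≥ n, we have l = j + m - n at step n, i.e. b_{j,m,n+1} = b_{j,m,n} - (q^{j+m-n} - 1). -/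
/-- `[1^m 0^j]_q = ∑_{i<m} q^{j+i}`. -/
def onesZeros (q j m : ℕ) : ℕ := ∑ i ∈ Finset.range m, q ^ (j + i)

/-- The greedy subtraction procedure: `bGreedy q j m t` is `b_{j,m,t+1}`;
at each step subtract `q^l - 1` for the largest `l ≥ 1` with
`q^l - 1 ≤` the current value. -/
def bGreedy (q j m : ℕ) : ℕ → ℕ
  | 0 => onesZeros q j m
  | t + 1 =>
      bGreedy q j m t -
        (q ^ (Nat.findGreatest (fun l => 1 ≤ l ∧ q ^ l - 1 ≤ bGreedy q j m t)
          (bGreedy q j m t)) - 1)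

/-!
Up to step `q^{j-1}` the greedy procedure only ever removes the leading one of the block of
ones: by induction `b = b_{j,m,t+1} = [1^{m-t} 0^j]_q + t`, and since `t < q^{j-1}` the extra `t`
fits below the block of ones, so `q^L - 1 ≤ b < q^{L+1} - 1` for the position `L = j + m - t - 1`
of the leading one. Subtracting `q^L - 1` then removes that one and adds `1`.
-/

def greedyExp (q b : ℕ) : ℕ := Nat.findGreatest (fun l => 1 ≤ l ∧ q ^ l - 1 ≤ b) b

lemma bGreedy_succ (q j m t : ℕ) :
    bGreedy q j m (t + 1) = bGreedy q j m t - (q ^ greedyExp q (bGreedy q j m t) - 1) :=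
  rfl

lemma greedyExp_eq {q b L : ℕ} (hq : 2 ≤ q) (hL : 1 ≤ L) (hlo : q ^ L ≤ b + 1)
    (hhi : b + 2 ≤ q ^ (L + 1)) : greedyExp q b = L := by
  have hL_lt : L < q ^ L := Nat.lt_pow_self (by omega)
  refine Nat.findGreatest_eq_iff.mpr ⟨by omega, fun _ => ⟨hL, by omega⟩, ?_⟩
  rintro l hLl - ⟨-, hl⟩
  have : q ^ (L + 1) ≤ q ^ l := Nat.pow_le_pow_right (by omega) hLl
  omega

lemma onesZeros_succ (q j k : ℕ) : onesZeros q j (k + 1) = onesZeros q j k + q ^ (j + k) :=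
  Finset.sum_range_succ _ _

lemma onesZeros_add_pow_le {q : ℕ} (hq : 2 ≤ q) (j k : ℕ) :
    onesZeros q j k + q ^ j ≤ q ^ (j + k) := by
  induction k with
  | zero => simp [onesZeros]
  | succ k ih =>
    rw [onesZeros_succ, ← add_assoc, pow_succ]
    have : q ^ (j + k) * 2 ≤ q ^ (j + k) * q := Nat.mul_le_mul_left _ hq
    omega

lemma greedyExp_onesZeros_add {q j t : ℕ} (hq : 2 ≤ q) (hj : 1 ≤ j) (ht : t < q ^ (j - 1))
    (k : ℕ) : greedyExp q (onesZeros q j (k + 1) + t) = j + k := by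
  have hbelow : q ^ (j - 1) + 1 ≤ q ^ j := by
    obtain ⟨i, rfl⟩ : ∃ i, j = i + 1 := ⟨j - 1, by omega⟩
    have : 1 ≤ q ^ i := Nat.one_le_pow _ _ (by omega)
    rw [pow_succ, Nat.add_sub_cancel]
    nlinarith
  have hle := onesZeros_add_pow_le hq j (k + 1)
  apply greedyExp_eq hq (by omega)
  · rw [onesZeros_succ]
    omega
  · rw [← add_assoc] at hle
    omega

lemma bGreedy_eq {q j m t : ℕ} (hq : 2 ≤ q) (hj : 1 ≤ j) (ht : t ≤ q ^ (j - 1)) (htm : t ≤ m) :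
    bGreedy q j m t = onesZeros q j (m - t) + t := by
  induction t with
  | zero => rfl
  | succ t ih =>
    obtain ⟨k, hk⟩ : ∃ k, m - t = k + 1 := ⟨m - t - 1, by omega⟩
    have hpos : 1 ≤ q ^ (j + k) := Nat.one_le_pow _ _ (by omega)
    rw [bGreedy_succ, ih (by omega) (by omega), hk, greedyExp_onesZeros_add hq hj (by omega),
      onesZeros_succ, show m - (t + 1) = k by omega]
    omega

/-- for `q ≥ 2`, `j ≥ 2`, `1 ≤ n ≤ q^{j-1}` and `m ≥ n`,
the largest valid `l` at step `n` is `j + m - n`, i.e.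
`b_{j,m,n+1} = b_{j,m,n} - (q^{j+m-n} - 1)`. -/
theorem stmt4 (q j : ℕ) (hq : 2 ≤ q) (hj : 2 ≤ j) (n m : ℕ)
    (hn1 : 1 ≤ n) (hn2 : n ≤ q ^ (j - 1)) (hm : n ≤ m) :
    Nat.findGreatest (fun l => 1 ≤ l ∧ q ^ l - 1 ≤ bGreedy q j m (n - 1))
        (bGreedy q j m (n - 1)) = j + m - n ∧
      bGreedy q j m n = bGreedy q j m (n - 1) - (q ^ (j + m - n) - 1) := by
  obtain ⟨t, rfl⟩ : ∃ t, n = t + 1 := ⟨n - 1, by omega⟩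
  obtain ⟨k, rfl⟩ : ∃ k, m = t + 1 + k := ⟨m - (t + 1), by omega⟩
  rw [Nat.add_sub_cancel, show j + (t + 1 + k) - (t + 1) = j + k by omega]
  have hexp : greedyExp q (bGreedy q j (t + 1 + k) t) = j + k := by
    rw [bGreedy_eq hq (by omega) (by omega) (by omega), show t + 1 + k - t = k + 1 by omega]
    exact greedyExp_onesZeros_add hq (by omega) (by omega) k
  exact ⟨hexp, by rw [bGreedy_succ, hexp]⟩
end

section
/- Let u and v be two ultimately periodic sequences with values in an abelian group, and let IN(u) denote the least index i such that (u_n)_{n≥i} is (purely) periodic. If IN(u) > IN(v), then u + v is ultimately periodic and IN(u+v) = IN(u). -/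
/-- A sequence is ultimately periodic if from some index on it is periodic. -/
def UltPer {G : Type} (w : ℕ → G) : Prop :=
  ∃ i T, 1 ≤ T ∧ ∀ n ≥ i, w (n + T) = w n

/-- `IN w` is the least index `i` such that `(w_n)_{n ≥ i}` is periodic. -/
noncomputable def IN {G : Type} (w : ℕ → G) : ℕ :=
  sInf {i | ∃ T, 1 ≤ T ∧ ∀ n ≥ i, w (n + T) = w n}

lemma per_mul {G : Type} {w : ℕ → G} {i T : ℕ}
    (h : ∀ n ≥ i, w (n + T) = w n) : ∀ k, ∀ n ≥ i, w (n + k * T) = w n := by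
  intro k
  induction k with
  | zero => simp
  | succ k ih =>
    intro n hn
    have e : n + (k + 1) * T = (n + k * T) + T := by ring
    rw [e, h _ (le_trans hn (Nat.le_add_right _ _)), ih n hn]

/-- for ultimately periodic sequences `u`, `v` in an abelian
group with `IN(u) > IN(v)`, the sum `u + v` is ultimately periodic and
`IN(u+v) = IN(u)`. -/
theorem stmt13 {G : Type} [AddCommGroup G] (u v : ℕ → G)
    (hu : UltPer u) (hv : UltPer v) (h : IN v < IN u) :
    UltPer (fun n => u n + v n) ∧ IN (fun n => u n + v n) = IN u := by
  obtain ⟨iu0, Tu0, hTu0, hpu0⟩ := hu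
  obtain ⟨iv0, Tv0, hTv0, hpv0⟩ := hv
  have hune : {i | ∃ T, 1 ≤ T ∧ ∀ n ≥ i, u (n + T) = u n}.Nonempty :=
    ⟨iu0, Tu0, hTu0, hpu0⟩
  have hvne : {i | ∃ T, 1 ≤ T ∧ ∀ n ≥ i, v (n + T) = v n}.Nonempty :=
    ⟨iv0, Tv0, hTv0, hpv0⟩
  obtain ⟨Tu, hTu, hpu⟩ : ∃ T, 1 ≤ T ∧ ∀ n ≥ IN u, u (n + T) = u n :=
    Nat.sInf_mem hune
  obtain ⟨Tv, hTv, hpv⟩ : ∃ T, 1 ≤ T ∧ ∀ n ≥ IN v, v (n + T) = v n :=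
    Nat.sInf_mem hvne
  have hsum : ∀ n ≥ IN u, u (n + Tu * Tv) + v (n + Tu * Tv) = u n + v n := by
    intro n hn
    have h1 : u (n + Tu * Tv) = u n := by
      have := per_mul hpu Tv n hn
      rwa [mul_comm Tv Tu] at this
    have h2 : v (n + Tu * Tv) = v n := per_mul hpv Tu n (le_trans h.le hn)
    rw [h1, h2]
  have hTuv : 1 ≤ Tu * Tv := Nat.one_le_iff_ne_zero.mpr (by positivity)
  have hup : UltPer (fun n => u n + v n) := ⟨IN u, Tu * Tv, hTuv, hsum⟩
  refine ⟨hup, le_antisymm (Nat.sInf_le ⟨Tu * Tv, hTuv, hsum⟩) ?_⟩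
  -- reverse inequality
  have hsne : {i | ∃ T, 1 ≤ T ∧ ∀ n ≥ i, (fun n => u n + v n) (n + T) = (fun n => u n + v n) n}.Nonempty := by
    obtain ⟨i, T, hT, hp⟩ := hup
    exact ⟨i, T, hT, hp⟩
  obtain ⟨P, hP, hpP⟩ : ∃ T, 1 ≤ T ∧ ∀ n ≥ IN (fun n => u n + v n),
      (fun n => u n + v n) (n + T) = (fun n => u n + v n) n := Nat.sInf_mem hsne
  set m := max (IN (fun n => u n + v n)) (IN v) with hm
  have hmem : ∀ n ≥ m, u (n + P * Tv) = u n := by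
    intro n hn
    have h1 : u (n + P * Tv) + v (n + P * Tv) = u n + v n := by
      have := per_mul (w := fun n => u n + v n) hpP Tv n (le_trans (le_max_left _ _) hn)
      rw [mul_comm Tv P] at this
      simpa using this
    have h2 : v (n + P * Tv) = v n :=
      per_mul hpv P n (le_trans (le_max_right _ _) hn)
    rw [h2] at h1
    exact add_right_cancel h1
  have hle : IN u ≤ m :=
    Nat.sInf_le ⟨P * Tv, Nat.one_le_iff_ne_zero.mpr (by positivity), hmem⟩
  rcases le_max_iff.mp hle with h1 | h1
  · exact h1
  · exact absurd h1 (not_le.mpr h)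
end
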